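/- Let f ∈ F₁(a,b) and Γ ⊂ M_b(Ω) satisfy: (a) there exists a nonempty set Ψ ⊂ Γ that is P(Ω)-determining and such that for every ψ ∈ Ψ there exist c₀ ∈ ℝ and ε₀ > 0 with c₀ + εψ ∈ Γ for all |ε| < ε₀; (b) f is strictly convex on a neighborhood of 1; and (c) f* is finite and continuously differentiable on a neighborhood of ν₀ := f'₊(1), the right derivative of f at 1. Then both D_f^Γ and W^Γ have the divergence property on probability measures on (Ω,M). -/

import Mathlib

open MeasureTheory Filter Set Topology ENNReal
open scoped Classical

noncomputable section

/-- The set of bounded measurable real-valued functions on `Ω`. -/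
def Mb (Ω : Type*) [MeasurableSpace Ω] : Set (Ω → ℝ) :=
  {g | Measurable g ∧ ∃ C : ℝ, ∀ x, |g x| ≤ C}

/-- The set of bounded continuous real-valued functions on `S`. -/
def Cb (S : Type*) [TopologicalSpace S] : Set (S → ℝ) :=
  {g | Continuous g ∧ ∃ C : ℝ, ∀ x, |g x| ≤ C}

/-- The positive part of an extended real number, as an element of `ℝ≥0∞`. -/
def posE (x : EReal) : ℝ≥0∞ := if x = ⊤ then ⊤ else ENNReal.ofReal x.toReal

/-- The extended-real-valued integral of an `EReal`-valued function, defined as the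
difference of the lower integrals of the positive and negative parts, with the
convention `∞ - ∞ = -∞`. -/
def eIntegral {Ω : Type*} [MeasurableSpace Ω] (P : Measure Ω) (h : Ω → EReal) : EReal :=
  ((∫⁻ x, posE (h x) ∂P : ℝ≥0∞) : EReal) - ((∫⁻ x, posE (-(h x)) ∂P : ℝ≥0∞) : EReal)

/-- The Legendre transform `f*(y) = sup_x {x*y - f(x)}` of `f : ℝ → (-∞,∞]`. -/
def fstar (f : ℝ → EReal) (y : ℝ) : EReal := ⨆ x : ℝ, (((x * y : ℝ) : EReal) - f x)

/-- `f : ℝ → (-∞,∞]` is (the convex LSC extension of) an element of `F₁(a,b)`: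
convex, lower semicontinuous, never `-∞`, finite exactly on the interval `(a,b)`
(with `+∞` strictly outside `[a,b]`), and `f(1) = 0` with `a < 1 < b`. -/
structure IsF1 (a b : EReal) (f : ℝ → EReal) : Prop where
  a_lt_one : a < ((1 : ℝ) : EReal)
  one_lt_b : ((1 : ℝ) : EReal) < b
  convex : ∀ x y t : ℝ, 0 < t → t < 1 →
    f (t * x + (1 - t) * y) ≤ ((t : ℝ) : EReal) * f x + (((1 - t : ℝ)) : EReal) * f y
  lsc : LowerSemicontinuous f
  ne_bot : ∀ x, f x ≠ ⊥
  finite_on : ∀ x : ℝ, a < (x : EReal) → (x : EReal) < b → f x ≠ ⊤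
  top_outside : ∀ x : ℝ, ((x : EReal) < a ∨ b < (x : EReal)) → f x = ⊤
  at_one : f 1 = 0

/-- `Λ_f^P[g] = inf_{ν ∈ ℝ} {ν + E_P[f*(g - ν)]}`. -/
def LambdaF {Ω : Type*} [MeasurableSpace Ω] (f : ℝ → EReal) (P : Measure Ω) (g : Ω → ℝ) :
    EReal :=
  ⨅ ν : ℝ, ((ν : EReal) + eIntegral P (fun x => fstar f (g x - ν)))

/-- The classical `f`-divergence `D_f(Q‖P) = E_P[f(dQ/dP)]` if `Q ≪ P`, else `∞`. -/
def fDivE {Ω : Type*} [MeasurableSpace Ω] (f : ℝ → EReal) (Q P : Measure Ω) : EReal :=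
  if Q ≪ P then eIntegral P (fun x => f ((Q.rnDeriv P x).toReal)) else ⊤

/-- The `(f,Γ)`-divergence `D_f^Γ(Q‖P) = sup_{g ∈ Γ} {E_Q[g] - Λ_f^P[g]}`. -/
def fGammaDiv {Ω : Type*} [MeasurableSpace Ω] (f : ℝ → EReal) (Γ : Set (Ω → ℝ))
    (Q P : Measure Ω) : EReal :=
  ⨆ g ∈ Γ, (((∫ x, g x ∂Q : ℝ) : EReal) - LambdaF f P g)

/-- The `Γ`-IPM `W^Γ(Q,P) = sup_{g ∈ Γ} {E_Q[g] - E_P[g]}`. -/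
def ipmW {Ω : Type*} [MeasurableSpace Ω] (Γ : Set (Ω → ℝ)) (Q P : Measure Ω) : EReal :=
  ⨆ g ∈ Γ, (((∫ x, g x ∂Q : ℝ) : EReal) - ((∫ x, g x ∂P : ℝ) : EReal))

end

/-- A set `Ψ` of functions is `P(Ω)`-determining: if two probability measures give the
same integral to every `ψ ∈ Ψ`, then they are equal. -/
def Determining {Ω : Type*} [MeasurableSpace Ω] (Ψ : Set (Ω → ℝ)) : Prop :=
  ∀ Q P : Measure Ω, IsProbabilityMeasure Q → IsProbabilityMeasure P →
    (∀ ψ ∈ Ψ, (∫ x, ψ x ∂Q) = ∫ x, ψ x ∂P) → Q = P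

/-!
Since `f 1 = 0`, `f* ≥ id`; hence `Λ_f^P[g] ≥ E_P[g]` and `D_f^Γ ≤ W^Γ`, and both vanish on the
diagonal. The right derivative `ν₀` is a subgradient of `f` at `1`, so `f*(ν₀) = ν₀`; as `f* - id`
is then minimal at `ν₀`, differentiability forces `(f*)'(ν₀) = 1`. Evaluating the infimum defining
`Λ_f^P[c₀ + εψ]` at `ν = c₀ + ε E_P[ψ] - ν₀` gives `Λ_f^P[c₀ + εψ] ≤ c₀ + ε E_P[ψ] + o(ε)`, i.e.
`D_f^Γ(Q‖P) ≥ ε (E_Q[ψ] - E_P[ψ]) - o(ε)` for small `ε` of either sign. At `ε = 0` this is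
nonnegativity, and if `D_f^Γ(Q‖P) = 0` it forces `E_Q[ψ] = E_P[ψ]` on the determining set `Ψ`,
so `Q = P`. The IPM inherits the divergence property through `D_f^Γ ≤ W^Γ`.
-/

lemma eventually_forall_abs_le_mul {p : ℝ → Prop} (h : ∀ᶠ t in 𝓝 0, p t) (K : ℝ) :
    ∀ᶠ ε in 𝓝 0, ∀ s, |s| ≤ K → p (ε * s) := by
  obtain ⟨r, hr, hp⟩ := Metric.eventually_nhds_iff.mp h
  have hK : 0 < |K| + 1 := by positivity
  filter_upwards [Metric.ball_mem_nhds 0 (div_pos hr hK)] with ε hε s hs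
  apply hp
  rw [Metric.mem_ball, Real.dist_eq, sub_zero, lt_div_iff₀ hK] at hε
  rw [Real.dist_eq, sub_zero, abs_mul]
  calc |ε| * |s| ≤ |ε| * (|K| + 1) := by gcongr; linarith [le_abs_self K]
    _ < r := hε

lemma eq_zero_of_forall_eventually_mul_le {d : ℝ}
    (h : ∀ η > 0, ∀ᶠ ε in 𝓝 (0 : ℝ), ε * d ≤ η * |ε|) : d = 0 := by
  refine abs_nonpos_iff.mp (le_of_forall_pos_le_add fun η hη => ?_)
  obtain ⟨r, hr, hle⟩ := Metric.eventually_nhds_iff.mp (h η hη)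
  have hr2 : |r / 2| = r / 2 := abs_of_pos (half_pos hr)
  have hpos := hle (y := r / 2) (by rw [Real.dist_eq, sub_zero, hr2]; linarith)
  have hneg := hle (y := -(r / 2)) (by rw [Real.dist_eq, sub_zero, abs_neg, hr2]; linarith)
  rw [hr2] at hpos
  rw [abs_neg, hr2] at hneg
  rw [zero_add, abs_le]
  constructor <;> nlinarith

section EIntegral

variable {Ω : Type*} [MeasurableSpace Ω] {P : Measure Ω}

lemma posE_coe (r : ℝ) : posE r = ENNReal.ofReal r := by
  simp [posE]

lemma posE_mono : Monotone posE := by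
  intro x y hxy
  rcases eq_or_ne y ⊤ with rfl | hy
  · simp [posE]
  rcases eq_or_ne x ⊥ with rfl | hx
  · simp [posE]
  have hx' : x ≠ ⊤ := ne_top_of_le_ne_top hy hxy
  simp only [posE, if_neg hx', if_neg hy]
  exact ENNReal.ofReal_le_ofReal (EReal.toReal_le_toReal hxy hx hy)

lemma eIntegral_mono {h₁ h₂ : Ω → EReal} (h : ∀ x, h₁ x ≤ h₂ x) :
    eIntegral P h₁ ≤ eIntegral P h₂ :=
  EReal.sub_le_sub
    (EReal.coe_ennreal_le_coe_ennreal_iff.mpr (lintegral_mono fun x => posE_mono (h x)))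
    (EReal.coe_ennreal_le_coe_ennreal_iff.mpr
      (lintegral_mono fun x => posE_mono (EReal.neg_le_neg_iff.mpr (h x))))

lemma eIntegral_coe {w : Ω → ℝ} (hw : Integrable w P) :
    eIntegral P (fun x => (w x : EReal)) = ((∫ x, w x ∂P : ℝ) : EReal) := by
  simp only [eIntegral, ← EReal.coe_neg, posE_coe]
  have hneg : ∫⁻ x, ENNReal.ofReal (-w x) ∂P ≠ ⊤ := hw.neg.lintegral_lt_top.ne
  rw [← EReal.coe_ennreal_toReal hw.lintegral_lt_top.ne, ← EReal.coe_ennreal_toReal hneg,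
    ← EReal.coe_sub, integral_eq_lintegral_pos_part_sub_lintegral_neg_part hw]

end EIntegral

lemma Mb.integrable {Ω : Type*} [MeasurableSpace Ω] {g : Ω → ℝ} (hg : g ∈ Mb Ω)
    (P : Measure Ω) [IsFiniteMeasure P] : Integrable g P := by
  obtain ⟨hm, C, hC⟩ := hg
  exact .of_bound hm.aestronglyMeasurable C (.of_forall hC)

lemma le_fstar {f : ℝ → EReal} (hf1 : f 1 = 0) (y : ℝ) : (y : EReal) ≤ fstar f y := by
  refine le_trans (le_of_eq ?_) (le_iSup (fun x : ℝ => ((x * y : ℝ) : EReal) - f x) 1)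
  simp [hf1]

lemma fstar_ne_bot {f : ℝ → EReal} (hf1 : f 1 = 0) (y : ℝ) : fstar f y ≠ ⊥ :=
  ne_bot_of_le_ne_bot (EReal.coe_ne_bot y) (le_fstar hf1 y)

namespace IsF1

variable {a b : EReal} {f : ℝ → EReal}

lemma one_mem_interior (hf : IsF1 a b f) : (1 : ℝ) ∈ interior {x | f x ≠ ⊤} := by
  obtain ⟨a', ha, ha1⟩ := EReal.exists_between_coe_real hf.a_lt_one
  obtain ⟨b', hb1, hb⟩ := EReal.exists_between_coe_real hf.one_lt_b
  refine mem_interior.mpr ⟨Ioo a' b', fun x hx => ?_, isOpen_Ioo, ?_, ?_⟩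
  · exact hf.finite_on x (ha.trans (EReal.coe_lt_coe_iff.mpr hx.1))
      ((EReal.coe_lt_coe_iff.mpr hx.2).trans hb)
  · exact_mod_cast ha1
  · exact_mod_cast hb1

lemma convexOn_toReal (hf : IsF1 a b f) :
    ConvexOn ℝ {x | f x ≠ ⊤} (fun x => (f x).toReal) := by
  have key : ∀ x ∈ {x | f x ≠ ⊤}, ∀ y ∈ {x | f x ≠ ⊤}, ∀ t : ℝ, 0 < t → t < 1 →
      f (t * x + (1 - t) * y) ≤ ((t * (f x).toReal + (1 - t) * (f y).toReal : ℝ) : EReal) := by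
    intro x hx y hy t ht0 ht1
    have := hf.convex x y t ht0 ht1
    rwa [← EReal.coe_toReal hx (hf.ne_bot x), ← EReal.coe_toReal hy (hf.ne_bot y)] at this
  refine (convexOn_iff_forall_pos.mpr ⟨?_, ?_⟩)
  · refine convex_iff_forall_pos.mpr fun x hx y hy s t hs ht hst => ?_
    obtain rfl : t = 1 - s := by linarith
    exact ne_top_of_le_ne_top (EReal.coe_ne_top _) (key x hx y hy s hs (by linarith))
  · intro x hx y hy s t hs ht hst
    obtain rfl : t = 1 - s := by linarith
    have := EReal.toReal_le_toReal (key x hx y hy s hs (by linarith)) (hf.ne_bot _)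
      (EReal.coe_ne_top _)
    rwa [EReal.toReal_coe] at this

lemma hasDerivWithinAt_toReal (hf : IsF1 a b f) {ν₀ : ℝ}
    (hν₀ : Tendsto (fun x : ℝ => (f x).toReal / (x - 1)) (𝓝[>] (1 : ℝ)) (𝓝 ν₀)) :
    HasDerivWithinAt (fun x => (f x).toReal) ν₀ (Ioi 1) 1 := by
  have hslope : slope (fun x => (f x).toReal) 1 = fun x => (f x).toReal / (x - 1) :=
    funext fun x => by simp [slope_def_field, hf.at_one]
  rwa [hasDerivWithinAt_iff_tendsto_slope' self_notMem_Ioi, hslope]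

lemma mul_sub_one_le (hf : IsF1 a b f) {ν₀ : ℝ}
    (hν₀ : Tendsto (fun x : ℝ => (f x).toReal / (x - 1)) (𝓝[>] (1 : ℝ)) (𝓝 ν₀)) (x : ℝ) :
    ((ν₀ * (x - 1) : ℝ) : EReal) ≤ f x := by
  rcases eq_or_ne (f x) ⊤ with hx | hx
  · simp [hx]
  rw [← EReal.coe_toReal hx (hf.ne_bot x), EReal.coe_le_coe_iff]
  have hconv := hf.convexOn_toReal
  have hderiv := (hf.hasDerivWithinAt_toReal hν₀).derivWithin (uniqueDiffWithinAt_Ioi 1)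
  rcases lt_trichotomy x 1 with hx1 | rfl | hx1
  · have hslope := (hconv.slope_le_leftDeriv_of_mem_interior hx hf.one_mem_interior hx1).trans
      (hconv.leftDeriv_le_rightDeriv_of_mem_interior hf.one_mem_interior)
    rw [hderiv, slope_def_field, div_le_iff₀ (by linarith)] at hslope
    simp only [hf.at_one, EReal.toReal_zero] at hslope
    linarith
  · simp [hf.at_one]
  · have hslope := hconv.rightDeriv_le_slope_of_mem_interior hf.one_mem_interior hx hx1
    rw [hderiv, slope_def_field, le_div_iff₀ (by linarith)] at hslope
    simpa [hf.at_one] using hslope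

lemma fstar_eq (hf : IsF1 a b f) {ν₀ : ℝ}
    (hν₀ : Tendsto (fun x : ℝ => (f x).toReal / (x - 1)) (𝓝[>] (1 : ℝ)) (𝓝 ν₀)) :
    fstar f ν₀ = ν₀ := by
  refine le_antisymm (iSup_le fun x => ?_) (le_fstar hf.at_one ν₀)
  calc ((x * ν₀ : ℝ) : EReal) - f x ≤ ((x * ν₀ : ℝ) : EReal) - ((ν₀ * (x - 1) : ℝ) : EReal) :=
        EReal.sub_le_sub le_rfl (hf.mul_sub_one_le hν₀ x)
    _ = ν₀ := by rw [← EReal.coe_sub]; ring_nf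

end IsF1

section LambdaF

variable {Ω : Type*} [MeasurableSpace Ω] {P : Measure Ω} {f : ℝ → EReal} {g : Ω → ℝ}

lemma integral_le_LambdaF [IsProbabilityMeasure P] (hf1 : f 1 = 0) (hg : Integrable g P) :
    ((∫ x, g x ∂P : ℝ) : EReal) ≤ LambdaF f P g := by
  refine le_iInf fun ν => ?_
  have hshift : eIntegral P (fun x => ((g x - ν : ℝ) : EReal)) = ((∫ x, g x ∂P) - ν : ℝ) := by
    rw [eIntegral_coe (w := fun x => g x - ν) (hg.sub (integrable_const ν)),
      integral_sub hg (integrable_const ν)]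
    simp
  calc ((∫ x, g x ∂P : ℝ) : EReal) = ν + (((∫ x, g x ∂P) - ν : ℝ) : EReal) := by
        rw [← EReal.coe_add]; ring_nf
    _ ≤ ν + eIntegral P (fun x => fstar f (g x - ν)) := by
        rw [← hshift]
        exact add_le_add le_rfl (eIntegral_mono fun x => le_fstar hf1 _)

lemma LambdaF_le_of_fstar_le {w : Ω → ℝ} (hw : Integrable w P) (ν : ℝ)
    (h : ∀ x, fstar f (g x - ν) ≤ w x) :
    LambdaF f P g ≤ ((ν + ∫ x, w x ∂P : ℝ) : EReal) :=
  calc LambdaF f P g ≤ ν + eIntegral P (fun x => fstar f (g x - ν)) := iInf_le _ ν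
    _ ≤ ν + eIntegral P (fun x => (w x : EReal)) := add_le_add le_rfl (eIntegral_mono h)
    _ = ((ν + ∫ x, w x ∂P : ℝ) : EReal) := by rw [eIntegral_coe hw, EReal.coe_add]

end LambdaF

section DerivFstar

variable {f : ℝ → EReal} {ν₀ : ℝ}

lemma hasDerivAt_toReal_fstar (hf1 : f 1 = 0) (hfstar : fstar f ν₀ = ν₀)
    (hfin : ∀ᶠ y in 𝓝 ν₀, fstar f y ≠ ⊤)
    (hd : DifferentiableAt ℝ (fun y => (fstar f y).toReal) ν₀) :
    HasDerivAt (fun y => (fstar f y).toReal) 1 ν₀ := by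
  have hmin : IsLocalMin (fun y => (fstar f y).toReal - y) ν₀ := by
    filter_upwards [hfin] with y hy
    have := EReal.toReal_le_toReal (le_fstar hf1 y) (EReal.coe_ne_bot y) hy
    simp only [hfstar, EReal.toReal_coe, sub_self] at this ⊢
    linarith
  have hzero := hmin.hasDerivAt_eq_zero (hd.hasDerivAt.sub (hasDerivAt_id ν₀))
  rw [sub_eq_zero] at hzero
  exact hzero ▸ hd.hasDerivAt

lemma eventually_fstar_le (hf1 : f 1 = 0) (hfstar : fstar f ν₀ = ν₀)
    (hfin : ∀ᶠ y in 𝓝 ν₀, fstar f y ≠ ⊤)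
    (hd : HasDerivAt (fun y => (fstar f y).toReal) 1 ν₀) {η : ℝ} (hη : 0 < η) :
    ∀ᶠ t in 𝓝 0, fstar f (ν₀ + t) ≤ ((ν₀ + t + η * |t| : ℝ) : EReal) := by
  have hlin : Tendsto (fun t : ℝ => ν₀ + t) (𝓝 0) (𝓝 ν₀) := by
    simpa using tendsto_const_nhds.add (tendsto_id (x := 𝓝 (0 : ℝ)))
  have hlo := (hasDerivAt_iff_isLittleO_nhds_zero.mp hd).def hη
  filter_upwards [hlo, hlin.eventually hfin] with t ht hfin_t
  rw [← EReal.coe_toReal hfin_t (fstar_ne_bot hf1 _), EReal.coe_le_coe_iff]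
  simp only [hfstar, EReal.toReal_coe, smul_eq_mul, mul_one, Real.norm_eq_abs] at ht
  linarith [le_abs_self ((fstar f (ν₀ + t)).toReal - ν₀ - t)]

end DerivFstar

section Perturbation

variable {Ω : Type*} [MeasurableSpace Ω] {P : Measure Ω} [IsProbabilityMeasure P]
  {f : ℝ → EReal} {ν₀ : ℝ}

lemma integral_const_add_mul {ψ : Ω → ℝ} (hψ : Integrable ψ P) (c ε : ℝ) :
    ∫ x, (c + ε * ψ x) ∂P = c + ε * ∫ x, ψ x ∂P := by
  rw [integral_add (integrable_const _) (hψ.const_mul ε), integral_const_mul]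
  simp

lemma eventually_LambdaF_const_add_mul_le (hf1 : f 1 = 0) (hfstar : fstar f ν₀ = ν₀)
    (hfin : ∀ᶠ y in 𝓝 ν₀, fstar f y ≠ ⊤)
    (hd : HasDerivAt (fun y => (fstar f y).toReal) 1 ν₀)
    {ψ : Ω → ℝ} (hψ : ψ ∈ Mb Ω) (c : ℝ) {η : ℝ} (hη : 0 < η) :
    ∀ᶠ ε in 𝓝 0, LambdaF f P (fun x => c + ε * ψ x)
      ≤ ((c + ε * ∫ x, ψ x ∂P + η * |ε| : ℝ) : EReal) := by
  have hψi := Mb.integrable hψ P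
  obtain ⟨-, C, hC⟩ := hψ
  set p := ∫ x, ψ x ∂P
  have hp : |p| ≤ |C| := by
    simpa using norm_integral_le_of_norm_le_const (μ := P) (C := |C|)
      (.of_forall fun x => (Real.norm_eq_abs _).trans_le ((hC x).trans (le_abs_self C)))
  have hdev : ∀ x, |ψ x - p| ≤ 2 * |C| := fun x =>
    (abs_sub _ _).trans (by linarith [(hC x).trans (le_abs_self C)])
  have hη' : 0 < η / (2 * |C| + 1) := by positivity
  filter_upwards [eventually_forall_abs_le_mul (eventually_fstar_le hf1 hfstar hfin hd hη')
    (2 * |C|)] with ε hε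
  set w : Ω → ℝ := fun x => (ν₀ - ε * p + η * |ε|) + ε * ψ x
  have hw : Integrable w P := (integrable_const _).add (hψi.const_mul ε)
  have hpointwise : ∀ x, fstar f ((c + ε * ψ x) - (c + ε * p - ν₀)) ≤ w x := by
    intro x
    have hslack : η / (2 * |C| + 1) * |ε * (ψ x - p)| ≤ η * |ε| := by
      rw [abs_mul, div_mul_eq_mul_div, div_le_iff₀ (by positivity)]
      have := mul_le_mul_of_nonneg_left (hdev x) (mul_nonneg hη.le (abs_nonneg ε))
      nlinarith [mul_nonneg hη.le (abs_nonneg ε)]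
    calc fstar f ((c + ε * ψ x) - (c + ε * p - ν₀)) = fstar f (ν₀ + ε * (ψ x - p)) := by
          ring_nf
      _ ≤ _ := hε _ (hdev x)
      _ ≤ w x := EReal.coe_le_coe_iff.mpr (by simp only [w]; linarith)
  refine (LambdaF_le_of_fstar_le hw _ hpointwise).trans_eq ?_
  rw [integral_const_add_mul hψi]
  congr 1
  ring

lemma eventually_le_fGammaDiv (hf1 : f 1 = 0) (hfstar : fstar f ν₀ = ν₀)
    (hfin : ∀ᶠ y in 𝓝 ν₀, fstar f y ≠ ⊤)
    (hd : HasDerivAt (fun y => (fstar f y).toReal) 1 ν₀)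
    {Γ : Set (Ω → ℝ)} {ψ : Ω → ℝ} (hψ : ψ ∈ Mb Ω) {c₀ ε₀ : ℝ} (hε₀ : 0 < ε₀)
    (hΓ : ∀ ε : ℝ, |ε| < ε₀ → (fun x => c₀ + ε * ψ x) ∈ Γ)
    (Q : Measure Ω) [IsProbabilityMeasure Q] {η : ℝ} (hη : 0 < η) :
    ∀ᶠ ε in 𝓝 0, ((ε * (∫ x, ψ x ∂Q - ∫ x, ψ x ∂P) - η * |ε| : ℝ) : EReal)
      ≤ fGammaDiv f Γ Q P := by
  have hsmall : ∀ᶠ ε in 𝓝 (0 : ℝ), |ε| < ε₀ := by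
    filter_upwards [Metric.ball_mem_nhds (0 : ℝ) hε₀] with ε hε
    simpa using hε
  filter_upwards [eventually_LambdaF_const_add_mul_le (P := P) hf1 hfstar hfin hd hψ c₀ hη,
    hsmall] with ε hΛ hε
  calc ((ε * (∫ x, ψ x ∂Q - ∫ x, ψ x ∂P) - η * |ε| : ℝ) : EReal)
      = ((∫ x, (c₀ + ε * ψ x) ∂Q : ℝ) : EReal)
        - ((c₀ + ε * ∫ x, ψ x ∂P + η * |ε| : ℝ) : EReal) := by
        rw [integral_const_add_mul (Mb.integrable hψ Q), ← EReal.coe_sub]; ring_nf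
    _ ≤ ((∫ x, (c₀ + ε * ψ x) ∂Q : ℝ) : EReal) - LambdaF f P (fun x => c₀ + ε * ψ x) :=
        EReal.sub_le_sub le_rfl hΛ
    _ ≤ fGammaDiv f Γ Q P :=
        le_iSup₂ (f := fun g _ => ((∫ x, g x ∂Q : ℝ) : EReal) - LambdaF f P g) _ (hΓ ε hε)

end Perturbation

section Divergence

variable {Ω : Type*} [MeasurableSpace Ω]

def HasDivergenceProperty (D : Measure Ω → Measure Ω → EReal) : Prop :=
  ∀ Q P : Measure Ω, IsProbabilityMeasure Q → IsProbabilityMeasure P →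
    0 ≤ D Q P ∧ (D Q P = 0 ↔ Q = P)

lemma HasDivergenceProperty.of_le {D W : Measure Ω → Measure Ω → EReal}
    (hD : HasDivergenceProperty D)
    (hle : ∀ Q P : Measure Ω, IsProbabilityMeasure P → D Q P ≤ W Q P)
    (hself : ∀ P : Measure Ω, W P P ≤ 0) : HasDivergenceProperty W := by
  intro Q P hQ hP
  obtain ⟨hnonneg, hzero⟩ := hD Q P hQ hP
  have hW : 0 ≤ W Q P := hnonneg.trans (hle Q P hP)
  refine ⟨hW, fun h => hzero.mp (le_antisymm ((hle Q P hP).trans h.le) hnonneg), ?_⟩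
  rintro rfl
  exact le_antisymm (hself Q) hW

lemma ipmW_self_nonpos (Γ : Set (Ω → ℝ)) (P : Measure Ω) : ipmW Γ P P ≤ 0 :=
  iSup₂_le fun _ _ => by rw [← EReal.coe_sub, sub_self, EReal.coe_zero]

lemma fGammaDiv_le_ipmW {f : ℝ → EReal} (hf1 : f 1 = 0) {Γ : Set (Ω → ℝ)} (hΓ : Γ ⊆ Mb Ω)
    (Q P : Measure Ω) [IsProbabilityMeasure P] : fGammaDiv f Γ Q P ≤ ipmW Γ Q P :=
  iSup₂_mono fun _ hg =>
    EReal.sub_le_sub le_rfl (integral_le_LambdaF hf1 (Mb.integrable (hΓ hg) P))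

theorem hasDivergenceProperty_fGammaDiv {f : ℝ → EReal} {ν₀ : ℝ} (hf1 : f 1 = 0)
    (hfstar : fstar f ν₀ = ν₀) (hfin : ∀ᶠ y in 𝓝 ν₀, fstar f y ≠ ⊤)
    (hd : HasDerivAt (fun y => (fstar f y).toReal) 1 ν₀)
    {Γ Ψ : Set (Ω → ℝ)} (hΓ : Γ ⊆ Mb Ω) (hΨ : Ψ.Nonempty) (hΨΓ : Ψ ⊆ Γ) (hdet : Determining Ψ)
    (hstab : ∀ ψ ∈ Ψ, ∃ c₀ ε₀ : ℝ, 0 < ε₀ ∧ ∀ ε : ℝ, |ε| < ε₀ → (fun x => c₀ + ε * ψ x) ∈ Γ) :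
    HasDivergenceProperty (fGammaDiv f Γ) := by
  intro Q P hQ hP
  have hest : ∀ ψ ∈ Ψ, ∀ η > 0, ∀ᶠ ε in 𝓝 0,
      ((ε * (∫ x, ψ x ∂Q - ∫ x, ψ x ∂P) - η * |ε| : ℝ) : EReal) ≤ fGammaDiv f Γ Q P := by
    intro ψ hψ η hη
    obtain ⟨c₀, ε₀, hε₀, hmem⟩ := hstab ψ hψ
    exact eventually_le_fGammaDiv hf1 hfstar hfin hd (hΓ (hΨΓ hψ)) hε₀ hmem Q hη
  obtain ⟨ψ₁, hψ₁⟩ := hΨ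
  have hnonneg : 0 ≤ fGammaDiv f Γ Q P := by
    simpa using (hest ψ₁ hψ₁ 1 one_pos).self_of_nhds
  refine ⟨hnonneg, fun hzero => hdet Q P hQ hP fun ψ hψ => ?_, ?_⟩
  · refine sub_eq_zero.mp (eq_zero_of_forall_eventually_mul_le fun η hη => ?_)
    filter_upwards [hest ψ hψ η hη] with ε hε
    rw [hzero, EReal.coe_nonpos] at hε
    linarith
  · rintro rfl
    exact le_antisymm ((fGammaDiv_le_ipmW hf1 hΓ Q Q).trans (ipmW_self_nonpos Γ Q)) hnonneg

end Divergence

theorem stmt9_general {Ω : Type*} [MeasurableSpace Ω] (a b : EReal) (f : ℝ → EReal)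
    (hf : IsF1 a b f)
    (Γ : Set (Ω → ℝ)) (hΓ : Γ ⊆ Mb Ω)
    -- (a) a nonempty `P(Ω)`-determining set `Ψ ⊆ Γ`, stable under small affine perturbations
    (ha : ∃ Ψ : Set (Ω → ℝ), Ψ.Nonempty ∧ Ψ ⊆ Γ ∧ Determining Ψ ∧
      ∀ ψ ∈ Ψ, ∃ c₀ ε₀ : ℝ, 0 < ε₀ ∧
        ∀ ε : ℝ, |ε| < ε₀ → (fun x => c₀ + ε * ψ x) ∈ Γ)
    -- (c) `f*` is finite and `C¹` on a neighborhood of `ν₀ := f'₊(1)`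
    (ν₀ : ℝ)
    (hν₀ : Filter.Tendsto (fun x : ℝ => (f x).toReal / (x - 1)) (𝓝[>] (1 : ℝ)) (𝓝 ν₀))
    (hc : ∃ δ : ℝ, 0 < δ ∧ (∀ y : ℝ, |y - ν₀| < δ → fstar f y ≠ ⊤) ∧
      ContDiffOn ℝ 1 (fun y => (fstar f y).toReal) (Metric.ball ν₀ δ)) :
    (∀ Q P : Measure Ω, IsProbabilityMeasure Q → IsProbabilityMeasure P →
      0 ≤ fGammaDiv f Γ Q P ∧ (fGammaDiv f Γ Q P = 0 ↔ Q = P))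
    ∧ (∀ Q P : Measure Ω, IsProbabilityMeasure Q → IsProbabilityMeasure P →
      0 ≤ ipmW Γ Q P ∧ (ipmW Γ Q P = 0 ↔ Q = P)) := by
  obtain ⟨Ψ, hΨ, hΨΓ, hdet, hstab⟩ := ha
  obtain ⟨δ, hδ, hfin, hC1⟩ := hc
  have hball : Metric.ball ν₀ δ ∈ 𝓝 ν₀ := Metric.ball_mem_nhds ν₀ hδ
  have hfin' : ∀ᶠ y in 𝓝 ν₀, fstar f y ≠ ⊤ := by
    filter_upwards [hball] with y hy
    exact hfin y (by rwa [Metric.mem_ball, Real.dist_eq] at hy)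
  have hfstar := hf.fstar_eq hν₀
  have hd := hasDerivAt_toReal_fstar hf.at_one hfstar hfin'
    ((hC1.differentiableOn one_ne_zero).differentiableAt hball)
  have hD := hasDivergenceProperty_fGammaDiv hf.at_one hfstar hfin' hd hΓ hΨ hΨΓ hdet hstab
  exact ⟨hD, hD.of_le (fun Q P _ => fGammaDiv_le_ipmW hf.at_one hΓ Q P) (ipmW_self_nonpos Γ)⟩

/-- Under assumptions (a)-(c), both `D_f^Γ` and `W^Γ` have the divergence
property on probability measures: they are nonnegative and vanish exactly on the diagonal. -/
theorem stmt9 {Ω : Type*} [MeasurableSpace Ω] (a b : EReal) (f : ℝ → EReal)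
    (hf : IsF1 a b f)
    (Γ : Set (Ω → ℝ)) (hΓ : Γ ⊆ Mb Ω) (hne : Γ.Nonempty)
    -- (a) a nonempty `P(Ω)`-determining set `Ψ ⊆ Γ`, stable under small affine perturbations
    (ha : ∃ Ψ : Set (Ω → ℝ), Ψ.Nonempty ∧ Ψ ⊆ Γ ∧ Determining Ψ ∧
      ∀ ψ ∈ Ψ, ∃ c₀ ε₀ : ℝ, 0 < ε₀ ∧
        ∀ ε : ℝ, |ε| < ε₀ → (fun x => c₀ + ε * ψ x) ∈ Γ)
    -- (b) `f` is strictly convex on a neighborhood of `1`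
    (hb : ∃ δ : ℝ, 0 < δ ∧ ∀ x y t : ℝ, |x - 1| < δ → |y - 1| < δ → x ≠ y → 0 < t → t < 1 →
      f (t * x + (1 - t) * y) < ((t : ℝ) : EReal) * f x + (((1 - t : ℝ)) : EReal) * f y)
    -- (c) `f*` is finite and `C¹` on a neighborhood of `ν₀ := f'₊(1)`
    (ν₀ : ℝ)
    (hν₀ : Filter.Tendsto (fun x : ℝ => (f x).toReal / (x - 1)) (𝓝[>] (1 : ℝ)) (𝓝 ν₀))
    (hc : ∃ δ : ℝ, 0 < δ ∧ (∀ y : ℝ, |y - ν₀| < δ → fstar f y ≠ ⊤) ∧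
      ContDiffOn ℝ 1 (fun y => (fstar f y).toReal) (Metric.ball ν₀ δ)) :
    (∀ Q P : Measure Ω, IsProbabilityMeasure Q → IsProbabilityMeasure P →
      0 ≤ fGammaDiv f Γ Q P ∧ (fGammaDiv f Γ Q P = 0 ↔ Q = P))
    ∧ (∀ Q P : Measure Ω, IsProbabilityMeasure Q → IsProbabilityMeasure P →
      0 ≤ ipmW Γ Q P ∧ (ipmW Γ Q P = 0 ↔ Q = P)) :=
  stmt9_general a b f hf Γ hΓ ha ν₀ hν₀ hc
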